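/- arXiv:0910.5634 — 6 statements merged into one kernel-verified Lean document; each statement's English description precedes it below -/
import Mathlib

section
/- Let α and β be paths in a topological space X with the same endpoints. Suppose there is a sequence (a_n, b_n) of pairwise disjoint open subintervals of [0,1] such that α and β coincide on [0,1] minus the union of the (a_n,b_n), and for each n the restriction of α to [a_n,b_n] is homotopic (rel endpoints) to the restriction of β to [a_n,b_n] within the set α([a_n,b_n]) ∪ β([a_n,b_n]). Then α and β are homotopic rel {0,1}. -/
/-!
Glue the homotopies: on the strip `[0,1] × (aₙ, bₙ)` use the given homotopy `Gₙ`, elsewhere the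
constant homotopy `(s, t) ↦ α t`. Continuity inside a strip and on its boundary lines is that of
`Gₙ`. At a height `t` outside every interval, the image of `Gₙ` lies in
`α '' [aₙ, bₙ] ∪ β '' [aₙ, bₙ]`, so it is close to `α t = β t` as soon as `[aₙ, bₙ]` is close to
`t`; and for every `δ > 0` all but finitely many intervals meeting `(t - δ, t + δ)` lie inside
`[t - δ, t + δ]`, namely all those that contain neither `t - δ` nor `t + δ`, each of these points
lying in at most one interval.
-/

open Set Filter Topology Function

section Intervals

variable {ι : Type*} {a b : ι → ℝ}

theorem eq_of_mem_Ioo_of_pairwise_disjoint (hdisj : Pairwise (Disjoint on fun n => Ioo (a n) (b n)))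
    {m n : ι} {x : ℝ} (hm : x ∈ Ioo (a m) (b m)) (hn : x ∈ Ioo (a n) (b n)) : m = n :=
  hdisj.eq (not_disjoint_iff.2 ⟨x, hm, hn⟩)

theorem subsingleton_setOf_mem_Ioo (hdisj : Pairwise (Disjoint on fun n => Ioo (a n) (b n)))
    (x : ℝ) : {n | x ∈ Ioo (a n) (b n)}.Subsingleton :=
  fun _ hm _ hn => eq_of_mem_Ioo_of_pairwise_disjoint hdisj hm hn

theorem left_notMem_iUnion_Ioo (hdisj : Pairwise (Disjoint on fun n => Ioo (a n) (b n)))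
    {n : ι} (hab : a n < b n) : a n ∉ ⋃ m, Ioo (a m) (b m) := by
  rw [mem_iUnion]
  rintro ⟨m, hm⟩
  have hmn : m ≠ n := by rintro rfl; exact lt_irrefl _ hm.1
  have := Ioo_disjoint_Ioo.1 (hdisj hmn)
  grind

theorem right_notMem_iUnion_Ioo (hdisj : Pairwise (Disjoint on fun n => Ioo (a n) (b n)))
    {n : ι} (hab : a n < b n) : b n ∉ ⋃ m, Ioo (a m) (b m) := by
  rw [mem_iUnion]
  rintro ⟨m, hm⟩
  have hmn : m ≠ n := by rintro rfl; exact lt_irrefl _ hm.2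
  have := Ioo_disjoint_Ioo.1 (hdisj hmn)
  grind

theorem Icc_subset_Icc_of_mem_Ioo_of_notMem {x y c d z : ℝ} (hz : z ∈ Ioo x y)
    (hzcd : z ∈ Ioo c d) (hx : x ∉ Ioo c d) (hy : y ∉ Ioo c d) : Icc c d ⊆ Icc x y := by
  simp only [mem_Ioo, not_and_or, not_lt] at hz hzcd hx hy
  exact Icc_subset_Icc (by grind) (by grind)

end Intervals

section Glue

variable {X ι : Type*} {α β : ℝ → X} {a b : ι → ℝ} {G : ι → ℝ × ℝ → X}

noncomputable def glue (α : ℝ → X) (a b : ι → ℝ) (G : ι → ℝ × ℝ → X) (p : ℝ × ℝ) : X :=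
  open Classical in if h : ∃ n, p.2 ∈ Ioo (a n) (b n) then G h.choose p else α p.2

theorem glue_of_notMem {p : ℝ × ℝ} (hp : p.2 ∉ ⋃ n, Ioo (a n) (b n)) :
    glue α a b G p = α p.2 :=
  dif_neg (by simpa only [mem_iUnion] using hp)

theorem glue_of_mem (hdisj : Pairwise (Disjoint on fun n => Ioo (a n) (b n))) {n : ι}
    {p : ℝ × ℝ} (hp : p.2 ∈ Ioo (a n) (b n)) : glue α a b G p = G n p := by
  have h : ∃ m, p.2 ∈ Ioo (a m) (b m) := ⟨n, hp⟩
  rw [glue, dif_pos h, eq_of_mem_Ioo_of_pairwise_disjoint hdisj h.choose_spec hp]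

theorem eqOn_glue (hdisj : Pairwise (Disjoint on fun n => Ioo (a n) (b n))) {n : ι}
    (hab : a n < b n)
    (hGend : ∀ s ∈ Icc (0 : ℝ) 1, G n (s, a n) = α (a n) ∧ G n (s, b n) = α (b n)) :
    EqOn (glue α a b G) (G n) (Icc 0 1 ×ˢ Icc (a n) (b n)) := by
  rintro ⟨s, t⟩ ⟨hs, ht⟩
  rcases eq_endpoints_or_mem_Ioo_of_mem_Icc ht with rfl | rfl | ht
  · exact (glue_of_notMem (left_notMem_iUnion_Ioo hdisj hab)).trans (hGend s hs).1.symm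
  · exact (glue_of_notMem (right_notMem_iUnion_Ioo hdisj hab)).trans (hGend s hs).2.symm
  · exact glue_of_mem hdisj ht

variable [TopologicalSpace X]

theorem continuousWithinAt_glue_of_mem {n : ι}
    (hF : ContinuousOn (glue α a b G) (Icc 0 1 ×ˢ Icc (a n) (b n)))
    {s t : ℝ} (hs : s ∈ Icc 0 1) (ht : t ∈ Ioo (a n) (b n)) :
    ContinuousWithinAt (glue α a b G) (Icc 0 1 ×ˢ Icc 0 1) (s, t) := by
  refine (hF (s, t) ⟨hs, Ioo_subset_Icc_self ht⟩).mono_of_mem_nhdsWithin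
    (mem_of_superset (inter_mem_nhdsWithin _ (prod_mem_nhds univ_mem (Ioo_mem_nhds ht.1 ht.2))) ?_)
  rintro ⟨s', t'⟩ ⟨⟨hs', -⟩, -, ht'⟩
  exact ⟨hs', Ioo_subset_Icc_self ht'⟩

theorem continuousWithinAt_glue_of_notMem
    (hα : ContinuousOn α (Icc 0 1)) (hβ : ContinuousOn β (Icc 0 1))
    (hdisj : Pairwise (Disjoint on fun n => Ioo (a n) (b n)))
    (hsub : ∀ n, Icc (a n) (b n) ⊆ Icc 0 1)
    (hF : ∀ n, ContinuousOn (glue α a b G) (Icc 0 1 ×ˢ Icc (a n) (b n)))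
    (hGimg : ∀ n, G n '' (Icc 0 1 ×ˢ Icc (a n) (b n)) ⊆ α '' Icc (a n) (b n) ∪ β '' Icc (a n) (b n))
    {s t : ℝ} (hs : s ∈ Icc 0 1) (ht : t ∈ Icc 0 1) (htU : t ∉ ⋃ n, Ioo (a n) (b n))
    (hαβ : α t = β t) :
    ContinuousWithinAt (glue α a b G) (Icc 0 1 ×ˢ Icc 0 1) (s, t) := by
  intro V hV
  change ∀ᶠ p in 𝓝[Icc 0 1 ×ˢ Icc 0 1] (s, t), glue α a b G p ∈ V
  have hFt : glue α a b G (s, t) = α t := glue_of_notMem htU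
  rw [hFt] at hV
  obtain ⟨δ, hδ, hδV⟩ : ∃ δ > 0, ∀ x ∈ Icc (t - δ) (t + δ), x ∈ Icc 0 1 → α x ∈ V ∧ β x ∈ V := by
    have hαV := eventually_nhdsWithin_iff.1 ((hα t ht).eventually_mem hV)
    have hβV := eventually_nhdsWithin_iff.1 ((hβ t ht).eventually_mem (hαβ ▸ hV))
    simpa only [Real.closedBall_eq_Icc] using Metric.nhds_basis_closedBall.eventually_iff.1
      (hαV.and hβV |>.mono fun x hx hx01 => ⟨hx.1 hx01, hx.2 hx01⟩)
  set S := {n | t - δ ∈ Ioo (a n) (b n)} ∪ {n | t + δ ∈ Ioo (a n) (b n)}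
  have hS : S.Finite := ((subsingleton_setOf_mem_Ioo hdisj _).finite).union
    (subsingleton_setOf_mem_Ioo hdisj _).finite
  have hnear : ∀ n, ∀ᶠ p in 𝓝 (s, t),
      p ∈ Icc 0 1 ×ˢ Icc 0 1 → p.2 ∈ Ioo (a n) (b n) → glue α a b G p ∈ V := by
    intro n
    by_cases htn : t ∈ Icc (a n) (b n)
    · have := eventually_nhdsWithin_iff.1 ((hF n (s, t) ⟨hs, htn⟩).eventually_mem (hFt ▸ hV))
      exact this.mono fun p hp hpK hpn => hp ⟨hpK.1, Ioo_subset_Icc_self hpn⟩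
    · have : ∀ᶠ p : ℝ × ℝ in 𝓝 (s, t), p.2 ∉ Icc (a n) (b n) :=
        continuous_snd.continuousAt (isClosed_Icc.compl_mem_nhds htn)
      exact this.mono fun p hp _ hpn => absurd (Ioo_subset_Icc_self hpn) hp
  have hδnhds : ∀ᶠ p : ℝ × ℝ in 𝓝 (s, t), p.2 ∈ Ioo (t - δ) (t + δ) :=
    continuous_snd.continuousAt.eventually_mem (Ioo_mem_nhds (by linarith) (by linarith))
  filter_upwards [self_mem_nhdsWithin, nhdsWithin_le_nhds hδnhds,
    nhdsWithin_le_nhds ((hS.eventually_all).2 fun n _ => hnear n)] with p hpK hpδ hpS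
  by_cases hpU : p.2 ∈ ⋃ n, Ioo (a n) (b n)
  · obtain ⟨n, hn⟩ := mem_iUnion.1 hpU
    by_cases hnS : n ∈ S
    · exact hpS n hnS hpK hn
    · simp only [S, mem_union, mem_ofPred_eq, not_or] at hnS
      have hclose := Icc_subset_Icc_of_mem_Ioo_of_notMem hpδ hn hnS.1 hnS.2
      rw [glue_of_mem hdisj hn]
      obtain ⟨x, hx, hxe⟩ | ⟨x, hx, hxe⟩ :=
        hGimg n ⟨p, ⟨hpK.1, Ioo_subset_Icc_self hn⟩, rfl⟩
      · exact hxe ▸ (hδV x (hclose hx) (hsub n hx)).1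
      · exact hxe ▸ (hδV x (hclose hx) (hsub n hx)).2
  · rw [glue_of_notMem hpU]
    exact (hδV _ (Ioo_subset_Icc_self hpδ) hpK.2).1

theorem continuousOn_glue
    (hα : ContinuousOn α (Icc 0 1)) (hβ : ContinuousOn β (Icc 0 1))
    (hdisj : Pairwise (Disjoint on fun n => Ioo (a n) (b n)))
    (hsub : ∀ n, Icc (a n) (b n) ⊆ Icc 0 1)
    (hF : ∀ n, ContinuousOn (glue α a b G) (Icc 0 1 ×ˢ Icc (a n) (b n)))
    (hGimg : ∀ n, G n '' (Icc 0 1 ×ˢ Icc (a n) (b n)) ⊆ α '' Icc (a n) (b n) ∪ β '' Icc (a n) (b n))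
    (heq : ∀ t ∈ Icc (0 : ℝ) 1, t ∉ ⋃ n, Ioo (a n) (b n) → α t = β t) :
    ContinuousOn (glue α a b G) (Icc 0 1 ×ˢ Icc 0 1) := by
  rintro ⟨s, t⟩ ⟨hs, ht⟩
  by_cases htU : t ∈ ⋃ n, Ioo (a n) (b n)
  · obtain ⟨n, hn⟩ := mem_iUnion.1 htU
    exact continuousWithinAt_glue_of_mem (hF n) hs hn
  · exact continuousWithinAt_glue_of_notMem hα hβ hdisj hsub hF hGimg hs ht htU (heq t ht htU)

end Glue

theorem statement0_general {X : Type*} [TopologicalSpace X]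
    (α β : ℝ → X)
    (hα : ContinuousOn α (Icc 0 1)) (hβ : ContinuousOn β (Icc 0 1))
    (a b : ℕ → ℝ)
    (hab : ∀ n, 0 ≤ a n ∧ a n < b n ∧ b n ≤ 1)
    (hdisj : ∀ m n, m ≠ n → Disjoint (Ioo (a m) (b m)) (Ioo (a n) (b n)))
    (heq : ∀ t ∈ Icc (0:ℝ) 1, t ∉ (⋃ n, Ioo (a n) (b n)) → α t = β t)
    (hhom : ∀ n, ∃ F : ℝ × ℝ → X,
      ContinuousOn F (Icc 0 1 ×ˢ Icc (a n) (b n)) ∧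
      (∀ t ∈ Icc (a n) (b n), F (0, t) = α t ∧ F (1, t) = β t) ∧
      (∀ s ∈ Icc (0:ℝ) 1, F (s, a n) = α (a n) ∧ F (s, b n) = α (b n)) ∧
      F '' (Icc 0 1 ×ˢ Icc (a n) (b n)) ⊆ α '' Icc (a n) (b n) ∪ β '' Icc (a n) (b n)) :
    ∃ F : ℝ × ℝ → X,
      ContinuousOn F (Icc 0 1 ×ˢ Icc 0 1) ∧
      (∀ t ∈ Icc (0:ℝ) 1, F (0, t) = α t ∧ F (1, t) = β t) ∧
      (∀ s ∈ Icc (0:ℝ) 1, F (s, 0) = α 0 ∧ F (s, 1) = α 1) := by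
  choose G hGcont hGside hGend hGimg using hhom
  have hdisj' : Pairwise (Disjoint on fun n => Ioo (a n) (b n)) := hdisj
  have hsub n : Icc (a n) (b n) ⊆ Icc 0 1 := Icc_subset_Icc (hab n).1 (hab n).2.2
  have hF n : ContinuousOn (glue α a b G) (Icc 0 1 ×ˢ Icc (a n) (b n)) :=
    (hGcont n).congr (eqOn_glue hdisj' (hab n).2.1 (hGend n))
  have h0 : (0 : ℝ) ∉ ⋃ n, Ioo (a n) (b n) := by
    simpa only [mem_iUnion, not_exists] using fun n hn => not_lt.2 (hab n).1 hn.1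
  have h1 : (1 : ℝ) ∉ ⋃ n, Ioo (a n) (b n) := by
    simpa only [mem_iUnion, not_exists] using fun n hn => not_lt.2 (hab n).2.2 hn.2
  refine ⟨glue α a b G, continuousOn_glue hα hβ hdisj' hsub hF hGimg heq, fun t ht => ?_,
    fun s _ => ⟨glue_of_notMem (p := (s, 0)) h0, glue_of_notMem (p := (s, 1)) h1⟩⟩
  by_cases htU : t ∈ ⋃ n, Ioo (a n) (b n)
  · obtain ⟨n, hn⟩ := mem_iUnion.1 htU
    rw [glue_of_mem (p := (0, t)) hdisj' hn, glue_of_mem (p := (1, t)) hdisj' hn]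
    exact hGside n t (Ioo_subset_Icc_self hn)
  · rw [glue_of_notMem (p := (0, t)) htU, glue_of_notMem (p := (1, t)) htU]
    exact ⟨rfl, heq t ht htU⟩

/-- Lemma `infhomotopies`. Let `α, β` be paths in a topological space `X`
(continuous on `[0,1]`, with the same endpoints).  Suppose there is a sequence
`(a n, b n)` of pairwise disjoint open subintervals of `[0,1]` such that `α` and `β`
coincide on `[0,1]` minus the union of the `(a n, b n)`, and for each `n` the restriction
of `α` to `[a n, b n]` is homotopic rel endpoints to the restriction of `β` to
`[a n, b n]` within `α '' [a n, b n] ∪ β '' [a n, b n]`.  Then `α` and `β` are homotopic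
rel `{0,1}`. -/
theorem statement0 {X : Type*} [TopologicalSpace X]
    (α β : ℝ → X)
    (hα : ContinuousOn α (Icc 0 1)) (hβ : ContinuousOn β (Icc 0 1))
    (h0 : α 0 = β 0) (h1 : α 1 = β 1)
    (a b : ℕ → ℝ)
    (hab : ∀ n, 0 ≤ a n ∧ a n < b n ∧ b n ≤ 1)
    (hdisj : ∀ m n, m ≠ n → Disjoint (Ioo (a m) (b m)) (Ioo (a n) (b n)))
    (heq : ∀ t ∈ Icc (0:ℝ) 1, t ∉ (⋃ n, Ioo (a n) (b n)) → α t = β t)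
    (hhom : ∀ n, ∃ F : ℝ × ℝ → X,
      ContinuousOn F (Icc 0 1 ×ˢ Icc (a n) (b n)) ∧
      (∀ t ∈ Icc (a n) (b n), F (0, t) = α t ∧ F (1, t) = β t) ∧
      (∀ s ∈ Icc (0:ℝ) 1, F (s, a n) = α (a n) ∧ F (s, b n) = α (b n)) ∧
      F '' (Icc 0 1 ×ˢ Icc (a n) (b n)) ⊆ α '' Icc (a n) (b n) ∪ β '' Icc (a n) (b n)) :
    ∃ F : ℝ × ℝ → X,
      ContinuousOn F (Icc 0 1 ×ˢ Icc 0 1) ∧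
      (∀ t ∈ Icc (0:ℝ) 1, F (0, t) = α t ∧ F (1, t) = β t) ∧
      (∀ s ∈ Icc (0:ℝ) 1, F (s, 0) = α 0 ∧ F (s, 1) = α 1) :=
  statement0_general α β hα hβ a b hab hdisj heq hhom
end

section
/- Let G be a connected locally finite graph and |G| its Freudenthal compactification. Every topological path σ: [0,1] → |G| traverses each edge of G only finitely often, i.e., for each edge e there are only finitely many maximal subintervals [s,t] of [0,1] with {σ(s),σ(t)} equal to the endpoints of e and σ((s,t)) equal to the open edge. -/
open Set

noncomputable section

/-- An abstract model of a connected locally finite graph `G` (with vertex set `V`)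
together with its Freudenthal compactification `|G| = X`: a compact Hausdorff space
containing the geometric realization of `G` (vertices and edges) as a dense subspace;
the points outside this realization are the ends of `G`. -/
structure FGraph where
  /-- the vertex set -/
  V : Type
  /-- the point set of the Freudenthal compactification `|G|` -/
  X : Type
  [topX : TopologicalSpace X]
  [cptX : CompactSpace X]
  [t2X : T2Space X]
  /-- the adjacency relation of `G` -/
  adj : V → V → Prop
  symm : ∀ {u v}, adj u v → adj v u
  loopless : ∀ v, ¬ adj v v
  /-- `G` is locally finite -/
  locallyFinite : ∀ v, {u | adj u v}.Finite
  /-- `G` is connected -/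
  conn : ∀ u v : V, ∃ (n : ℕ) (c : ℕ → V), c 0 = u ∧ c n = v ∧ ∀ i < n, adj (c i) (c (i + 1))
  /-- the embedding of the vertices into `|G|` -/
  vtx : V → X
  vtx_inj : Function.Injective vtx
  /-- for each pair of adjacent vertices `u,v`, a parametrization `[0,1] → |G|` of
  the edge `uv` (the fixed characteristic map of this `1`-cell) -/
  θ : V → V → ℝ → X
  θ_cont : ∀ {u v}, adj u v → ContinuousOn (θ u v) (Icc 0 1)
  θ_injOn : ∀ {u v}, adj u v → InjOn (θ u v) (Icc 0 1)
  θ_zero : ∀ {u v}, adj u v → θ u v 0 = vtx u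
  θ_one : ∀ {u v}, adj u v → θ u v 1 = vtx v
  θ_symm : ∀ {u v}, adj u v → ∀ t, θ v u t = θ u v (1 - t)
  /-- the interior of an edge avoids all vertices -/
  int_avoids_vtx : ∀ {u v}, adj u v → ∀ t ∈ Ioo (0:ℝ) 1, θ u v t ∉ range vtx
  /-- distinct edges have disjoint interiors -/
  edges_disj : ∀ {u v u' v'}, adj u v → adj u' v' →
    ¬(u = u' ∧ v = v') → ¬(u = v' ∧ v = u') →
    Disjoint (θ u v '' Ioo 0 1) (θ u' v' '' Ioo 0 1)
  /-- the geometric realization of `G` is dense in `|G|` … -/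
  dense_graph : Dense (range vtx ∪ ⋃ (u) (v) (_ : adj u v), θ u v '' Ioo 0 1)
  /-- … and open in `|G|` (its complement is the compact set of ends) -/
  open_graph : IsOpen (range vtx ∪ ⋃ (u) (v) (_ : adj u v), θ u v '' Ioo 0 1)

attribute [instance] FGraph.topX FGraph.cptX FGraph.t2X

namespace FGraph

variable (Γ : FGraph)

/-- The geometric realization of the graph `G` inside `|G|`. -/
def graphPart : Set Γ.X :=
  range Γ.vtx ∪ ⋃ (u) (v) (_ : Γ.adj u v), Γ.θ u v '' Ioo 0 1

/-- The set of ends of `G`, i.e. the points of `|G|` outside the graph itself. -/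
def ends : Set Γ.X := (Γ.graphPart)ᶜ

/-- The interior of the edge `uv` in `|G|`. -/
def edgeInt (u v : Γ.V) : Set Γ.X := Γ.θ u v '' Ioo 0 1

/-- `σ` has a *pass* through the (oriented) edge `(u,v)` on the subinterval `[s,t]`:
`σ s = u`, `σ t = v`, and `σ` maps `(s,t)` onto the open edge `uv`. -/
def IsPass (σ : C(unitInterval, Γ.X)) (u v : Γ.V) (s t : unitInterval) : Prop :=
  s < t ∧ σ s = Γ.vtx u ∧ σ t = Γ.vtx v ∧ σ '' Ioo s t = Γ.edgeInt u v

/-- The number of passes of a path `σ` through the oriented edge `(u,v)`. -/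
def passCount (σ : C(unitInterval, Γ.X)) (u v : Γ.V) : ℕ :=
  {p : unitInterval × unitInterval | Γ.IsPass σ u v p.1 p.2}.ncard

/-- The signed number of traversals of the oriented edge `(u,v)` by `σ`. -/
def netCrossings (σ : C(unitInterval, Γ.X)) (u v : Γ.V) : ℤ :=
  (Γ.passCount σ u v : ℤ) - (Γ.passCount σ v u : ℤ)

/-- A circle in `|G|`: a loop that is injective on `[0,1)`. -/
def IsCircle (σ : C(unitInterval, Γ.X)) : Prop :=
  σ 0 = σ 1 ∧ InjOn σ (Ico 0 1)

/-- The oriented topological cycle space `C⃗(G)`: all thin sums of oriented circuits,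
an oriented circuit being the signed edge-traversal function of a circle in `|G|`.
(A family is thin if every oriented edge gets a nonzero value from only finitely many
members.)  Elements are recorded as antisymmetric functions `V → V → ℤ`. -/
def orientedCycleSpace : Set (Γ.V → Γ.V → ℤ) :=
  {φ | ∃ (ι : Type) (c : ι → C(unitInterval, Γ.X)),
    (∀ i, Γ.IsCircle (c i)) ∧
    (∀ u v, {i | Γ.netCrossings (c i) u v ≠ 0}.Finite) ∧
    (∀ u v, φ u v = ∑ᶠ i, Γ.netCrossings (c i) u v)}

/-- The oriented cut `E⃗(U, U')` given by the partition `(U, Uᶜ)` of `V`. -/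
def cutSet (U : Set Γ.V) : Set (Γ.V × Γ.V) :=
  {p | Γ.adj p.1 p.2 ∧ p.1 ∈ U ∧ p.2 ∉ U}

end FGraph

/-!
Fix an interior point `m` of the edge `uv`. The fibres `σ⁻¹(u)` and `σ⁻¹(m)` are disjoint
compact subsets of `[0,1]`, hence at distance at least some `r > 0`. Every pass starts in
`σ⁻¹(u)` and meets `σ⁻¹(m)` before it ends, and no later pass can start before it ends; so the
start points of distinct passes are `r`-separated, and there are only finitely many of them.
A pass is determined by its start point, because its end is the first vertex hit afterwards.
-/

open scoped ENNReal NNReal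

theorem Metric.IsSeparated.finite_of_totallyBounded {X : Type*} [PseudoEMetricSpace X]
    {ε : ℝ≥0∞} {s C : Set X} (hε : ε ≠ 0) (hs : TotallyBounded s) (hCs : C ⊆ s)
    (hC : IsSeparated ε C) : C.Finite := by
  obtain ⟨N, hN, hsN⟩ := EMetric.totallyBounded_iff.1 hs (ε / 2) (ENNReal.half_pos hε)
  have hnear : ∀ x ∈ C, ∃ y ∈ N, edist x y < ε / 2 := fun x hx => by
    simpa using hsN (hCs hx)
  choose! f hfN hf using hnear
  refine (hN.subset (image_subset_iff.2 hfN)).of_finite_image fun x hx y hy hxy => ?_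
  by_contra hne
  refine (hC hx hy hne).not_ge ?_
  calc edist x y ≤ edist x (f x) + edist y (f y) := by
        rw [hxy]; exact edist_triangle_right _ _ _
    _ ≤ ε / 2 + ε / 2 := add_le_add (hf x hx).le (hf y hy).le
    _ = ε := ENNReal.add_halves ε

theorem exists_pos_lt_edist_of_apply_eq_of_ne {Y Z : Type*} [PseudoEMetricSpace Y]
    [CompactSpace Y] [TopologicalSpace Z] [T1Space Z] {f : Y → Z} (hf : Continuous f)
    {z z' : Z} (hz : z ≠ z') :
    ∃ r : ℝ≥0, 0 < r ∧ ∀ a b, f a = z → f b = z' → (r : ℝ≥0∞) < edist a b := by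
  obtain ⟨r, hr, h⟩ := Metric.exists_pos_forall_lt_edist
    (isClosed_singleton.preimage hf).isCompact (isClosed_singleton.preimage hf)
    ((disjoint_singleton.2 hz).preimage f)
  exact ⟨r, hr, fun a b ha hb => h a ha b hb⟩

namespace FGraph

variable {Γ : FGraph} {u v : Γ.V}

theorem vtx_notMem_edgeInt (huv : Γ.adj u v) (w : Γ.V) : Γ.vtx w ∉ Γ.edgeInt u v := by
  rintro ⟨r, hr, hrw⟩
  exact Γ.int_avoids_vtx huv r hr ⟨w, hrw.symm⟩

variable {σ : C(unitInterval, Γ.X)} {s t s' t' : unitInterval}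

theorem IsPass.notMem_Ioo (huv : Γ.adj u v) (hp : Γ.IsPass σ u v s t) {r : unitInterval}
    {w : Γ.V} (hr : σ r = Γ.vtx w) : r ∉ Ioo s t := fun hmem =>
  vtx_notMem_edgeInt huv w (hr ▸ hp.2.2.2 ▸ mem_image_of_mem σ hmem)

theorem IsPass.snd_le_of_fst_lt (huv : Γ.adj u v) (hp : Γ.IsPass σ u v s t)
    (hq : Γ.IsPass σ u v s' t') (h : s < s') : t ≤ s' :=
  not_lt.1 fun h' => hp.notMem_Ioo huv hq.2.1 ⟨h, h'⟩

theorem IsPass.snd_eq_of_fst_eq (huv : Γ.adj u v) (hp : Γ.IsPass σ u v s t)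
    (hq : Γ.IsPass σ u v s' t') (h : s = s') : t = t' := by
  subst h
  by_contra hne
  rcases lt_or_gt_of_ne hne with hlt | hlt
  · exact hq.notMem_Ioo huv hp.2.2.1 ⟨hp.1, hlt⟩
  · exact hp.notMem_Ioo huv hq.2.2.1 ⟨hq.1, hlt⟩

theorem IsPass.lt_edist_fst (huv : Γ.adj u v) {m : Γ.X} (hm : m ∈ Γ.edgeInt u v)
    {r : ℝ≥0∞} (hr : ∀ a b, σ a = Γ.vtx u → σ b = m → r < edist a b)
    (hp : Γ.IsPass σ u v s t) (hq : Γ.IsPass σ u v s' t') (h : s < s') :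
    r < edist s s' := by
  obtain ⟨x, hx, hxm⟩ : m ∈ σ '' Ioo s t := hp.2.2.2 ▸ hm
  have hxs' : (x : ℝ) ∈ uIcc (s : ℝ) s' := Icc_subset_uIcc
    ⟨hx.1.le, (hx.2.le.trans (hp.snd_le_of_fst_lt huv hq h))⟩
  calc r < edist s x := hr s x hp.2.1 hxm
    _ ≤ edist s s' := by
      rw [Subtype.edist_eq, Subtype.edist_eq, edist_dist, edist_dist]
      exact ENNReal.ofReal_le_ofReal (Real.dist_left_le_of_mem_uIcc hxs')

theorem isSeparated_fst_passes (huv : Γ.adj u v) {m : Γ.X} (hm : m ∈ Γ.edgeInt u v)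
    {r : ℝ≥0∞} (hr : ∀ a b, σ a = Γ.vtx u → σ b = m → r < edist a b) :
    Metric.IsSeparated r (Prod.fst '' {p | Γ.IsPass σ u v p.1 p.2}) := by
  rintro _ ⟨p, hp, rfl⟩ _ ⟨q, hq, rfl⟩ hne
  rcases lt_or_gt_of_ne hne with h | h
  · exact IsPass.lt_edist_fst huv hm hr hp hq h
  · exact edist_comm q.1 p.1 ▸ IsPass.lt_edist_fst huv hm hr hq hp h

end FGraph

/-- Lemma `pass`. Every topological path `σ : [0,1] → |G|` in the
Freudenthal compactification of a connected locally finite graph `G` traverses each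
edge of `G` only finitely often: for each edge `uv` there are only finitely many
subintervals `[s,t]` of `[0,1]` on which `σ` has a pass through `uv`. -/
theorem statement1 (Γ : FGraph) (σ : C(unitInterval, Γ.X)) :
    ∀ u v : Γ.V, Γ.adj u v →
      {p : unitInterval × unitInterval | Γ.IsPass σ u v p.1 p.2}.Finite := by
  intro u v huv
  have hm : Γ.θ u v (1 / 2) ∈ Γ.edgeInt u v := ⟨1 / 2, by norm_num, rfl⟩
  have hne : Γ.vtx u ≠ Γ.θ u v (1 / 2) := fun h => FGraph.vtx_notMem_edgeInt huv u (h ▸ hm)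
  obtain ⟨r, hr0, hr⟩ := exists_pos_lt_edist_of_apply_eq_of_ne σ.continuous hne
  have hfst : InjOn Prod.fst {p : unitInterval × unitInterval | Γ.IsPass σ u v p.1 p.2} :=
    fun p hp q hq h => Prod.ext h (hp.snd_eq_of_fst_eq huv hq h)
  refine Finite.of_finite_image ?_ hfst
  exact (FGraph.isSeparated_fst_passes huv hm hr).finite_of_totallyBounded
    (ENNReal.coe_ne_zero.2 hr0.ne') isCompact_univ.totallyBounded (subset_univ _)
end
end

section
/- In a metric space T with the property that for any two points x,y there is a unique arc xTy between them, and such that for any point z on the arc yTy' one has d(y,y') = d(y,z) + d(z,y'), the map F(y,t) = the unique point on the arc xTy at distance (1−t)·d(x,y) from a fixed basepoint x is a continuous homotopy, i.e., d(F(y,t), F(y',t)) ≤ d(y,y') for all y, y' and t ∈ [0,1]. -/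
/-!
Points of an arc `arc x y` are linearly ordered by their distance from `x`, and additivity makes
the distance between two of them the difference of their distances from `x`. Let `m` be the
point of `arc x y ∩ arc x y'` farthest from `x`. Past `m` the arcs towards `y` and `y'` meet
only in `m`, so their union is an arc and hence equals `arc y y'`; thus
`d(y, y') = d(y, m) + d(m, y')`. If `F y t` and `F y' t` both lie before `m` they are on the
common arc `arc x m` and their distance is `(1 - t) |d(x, y) - d(x, y')| ≤ d(y, y')`;
otherwise the path through `m` gives the bound.
-/

open Set

/-- A set `s` is an arc from `y` to `y'`: the homeomorphic (here: continuous injective)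
image of `[0,1]` with endpoints `y, y'`. -/
def IsArcBetween {T : Type*} [TopologicalSpace T] (y y' : T) (s : Set T) : Prop :=
  ∃ γ : ℝ → T, ContinuousOn γ (Icc 0 1) ∧ InjOn γ (Icc 0 1) ∧
    γ 0 = y ∧ γ 1 = y' ∧ γ '' Icc 0 1 = s

open AffineMap

section Arcs

variable {T : Type*} [TopologicalSpace T]

theorem isArcBetween_image_uIcc {γ : ℝ → T} {a b : ℝ} (hab : a ≠ b)
    (hc : ContinuousOn γ (uIcc a b)) (hi : InjOn γ (uIcc a b)) :
    IsArcBetween (γ a) (γ b) (γ '' uIcc a b) := by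
  have himage : lineMap a b '' Icc (0 : ℝ) 1 = uIcc a b := by
    rw [← segment_eq_image_lineMap, segment_eq_uIcc]
  have hmaps : MapsTo (lineMap a b : ℝ → ℝ) (Icc 0 1) (uIcc a b) :=
    himage ▸ mapsTo_image _ _
  refine ⟨γ ∘ lineMap a b, hc.comp (by fun_prop) hmaps,
    hi.comp (lineMap_injective ℝ hab).injOn hmaps, by simp, by simp, ?_⟩
  rw [image_comp, himage]

theorem IsArcBetween.symm {p q : T} {s : Set T} (h : IsArcBetween p q s) :
    IsArcBetween q p s := by
  obtain ⟨γ, hc, hi, rfl, rfl, rfl⟩ := h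
  rw [← uIcc_of_ge zero_le_one] at hc hi ⊢
  exact isArcBetween_image_uIcc one_ne_zero hc hi

theorem IsArcBetween.union {p m q : T} {s s' : Set T} (h : IsArcBetween p m s)
    (h' : IsArcBetween m q s') (hss' : ∀ w ∈ s, w ∈ s' → w = m) :
    IsArcBetween p q (s ∪ s') := by
  obtain ⟨γ, hc, hi, rfl, hγ1, rfl⟩ := h
  obtain ⟨γ', hc', hi', hγ'0, rfl, rfl⟩ := h'
  set δ : ℝ → T := fun u => if u ≤ 1 then γ u else γ' (u - 1)
  set σ : ℝ → ℝ := fun u => u - 1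
  have hσ : σ '' Icc 1 2 = Icc 0 1 := by simp [σ]; norm_num
  have hσmaps : MapsTo σ (Icc 1 2) (Icc 0 1) := hσ ▸ mapsTo_image _ _
  have hδ : EqOn δ γ (Icc 0 1) := fun u hu => if_pos hu.2
  have hδ' : EqOn δ (γ' ∘ σ) (Icc 1 2) := by
    intro u hu
    rcases hu.1.eq_or_lt with rfl | hlt
    · simp [δ, σ, hγ1, hγ'0]
    · exact if_neg hlt.not_ge
  have hsplit : Icc (0 : ℝ) 2 = Icc 0 1 ∪ Icc 1 2 :=
    (Icc_union_Icc_eq_Icc zero_le_one one_le_two).symm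
  have hcross : ∀ u ∈ Icc (0 : ℝ) 1, ∀ v ∈ Icc (1 : ℝ) 2, δ u = δ v → u = v := by
    intro u hu v hv huv
    have hm : δ u = m := hss' _ (hδ hu ▸ mem_image_of_mem γ hu)
      (huv ▸ hδ' hv ▸ mem_image_of_mem γ' (hσmaps hv))
    have hu1 : u = 1 := hi hu (right_mem_Icc.2 zero_le_one) (by rw [← hδ hu, hm, hγ1])
    have hv1 : σ v = 0 := hi' (hσmaps hv) (left_mem_Icc.2 zero_le_one)
      (((hδ' hv).symm.trans (huv.symm.trans hm)).trans hγ'0.symm)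
    simp only [σ] at hv1
    linarith
  have hcδ : ContinuousOn δ (uIcc 0 2) := by
    rw [uIcc_of_le zero_le_two, hsplit]
    exact (hc.congr hδ).union_of_isClosed ((hc'.comp (by fun_prop) hσmaps).congr hδ')
      isClosed_Icc isClosed_Icc
  have hiδ : InjOn δ (uIcc 0 2) := by
    rw [uIcc_of_le zero_le_two, hsplit]
    rintro u (hu | hu) v (hv | hv) huv
    · exact (hi.congr hδ.symm) hu hv huv
    · exact hcross u hu v hv huv
    · exact (hcross v hv u hu huv.symm).symm
    · exact (hi'.comp sub_left_injective.injOn hσmaps |>.congr hδ'.symm) hu hv huv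
  have himage : δ '' uIcc 0 2 = γ '' Icc 0 1 ∪ γ' '' Icc 0 1 := by
    rw [uIcc_of_le zero_le_two, hsplit, image_union, hδ.image_eq, hδ'.image_eq, image_comp, hσ]
  convert isArcBetween_image_uIcc two_ne_zero.symm hcδ hiδ using 1 <;> norm_num [δ, himage]

end Arcs

theorem abs_sub_add_abs_sub_le {a b c t : ℝ} (ht : t ∈ Icc (0 : ℝ) 1) (hc : 0 ≤ c)
    (hca : c ≤ a) (hcb : c ≤ b) (habc : c < (1 - t) * a ∨ c < (1 - t) * b) :
    |(1 - t) * a - c| + |(1 - t) * b - c| ≤ (a - c) + (b - c) := by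
  obtain ⟨ht0, ht1⟩ := ht
  rcases abs_cases ((1 - t) * a - c) with ⟨ha, -⟩ | ⟨ha, -⟩ <;>
  rcases abs_cases ((1 - t) * b - c) with ⟨hb, -⟩ | ⟨hb, -⟩ <;>
  rcases habc with habc | habc <;> nlinarith

structure IsUniqueArcFamily {T : Type*} [TopologicalSpace T] (arc : T → T → Set T) : Prop where
  isArcBetween : ∀ y y', y ≠ y' → IsArcBetween y y' (arc y y')
  arc_self : ∀ y, arc y y = {y}
  eq_arc : ∀ y y' s, IsArcBetween y y' s → s = arc y y'

def DistAdditiveOnArcs {T : Type*} [MetricSpace T] (arc : T → T → Set T) : Prop :=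
  ∀ y y', ∀ z ∈ arc y y', dist y y' = dist y z + dist z y'

namespace IsUniqueArcFamily

section Topology

variable {T : Type*} [TopologicalSpace T] {arc : T → T → Set T}

theorem arc_comm (h : IsUniqueArcFamily arc) (p q : T) : arc p q = arc q p := by
  rcases eq_or_ne p q with rfl | hpq
  · rfl
  · exact h.eq_arc q p _ (h.isArcBetween p q hpq).symm

theorem isCompact_arc [T2Space T] (h : IsUniqueArcFamily arc) (p q : T) :
    IsCompact (arc p q) := by
  rcases eq_or_ne p q with rfl | hpq
  · simp [h.arc_self]
  · obtain ⟨γ, hc, -, -, -, hγ⟩ := h.isArcBetween p q hpq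
    exact hγ ▸ isCompact_Icc.image_of_continuousOn hc

theorem exists_param (h : IsUniqueArcFamily arc) (p q : T) :
    ∃ γ : ℝ → T, γ 0 = p ∧ γ 1 = q ∧
      ∀ a b, 0 ≤ a → a ≤ b → b ≤ 1 → γ '' Icc a b = arc (γ a) (γ b) := by
  rcases eq_or_ne p q with rfl | hpq
  · refine ⟨fun _ => p, rfl, rfl, fun a b _ hab _ => ?_⟩
    rw [(nonempty_Icc.2 hab).image_const, h.arc_self]
  obtain ⟨γ, hc, hi, rfl, rfl, -⟩ := h.isArcBetween p q hpq
  refine ⟨γ, rfl, rfl, fun a b ha hab hb => ?_⟩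
  rcases hab.eq_or_lt with rfl | hlt
  · rw [Icc_self, image_singleton, h.arc_self]
  have hsub : uIcc a b ⊆ Icc 0 1 := by rw [uIcc_of_le hab]; exact Icc_subset_Icc ha hb
  rw [← uIcc_of_le hab]
  exact h.eq_arc _ _ _ (isArcBetween_image_uIcc hlt.ne (hc.mono hsub) (hi.mono hsub))

theorem left_mem_arc (h : IsUniqueArcFamily arc) (p q : T) : p ∈ arc p q := by
  obtain ⟨γ, rfl, rfl, hγ⟩ := h.exists_param p q
  exact hγ 0 1 le_rfl zero_le_one le_rfl ▸ mem_image_of_mem γ (left_mem_Icc.2 zero_le_one)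

theorem right_mem_arc (h : IsUniqueArcFamily arc) (p q : T) : q ∈ arc p q :=
  h.arc_comm q p ▸ h.left_mem_arc q p

theorem mem_arc_or_mem_arc (h : IsUniqueArcFamily arc) {p q z w : T} (hz : z ∈ arc p q)
    (hw : w ∈ arc p q) : z ∈ arc p w ∨ w ∈ arc p z := by
  obtain ⟨γ, rfl, rfl, hγ⟩ := h.exists_param p q
  rw [← hγ 0 1 le_rfl zero_le_one le_rfl] at hz hw
  obtain ⟨s, hs, rfl⟩ := hz
  obtain ⟨s', hs', rfl⟩ := hw
  rcases le_total s s' with hss' | hs's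
  · exact .inl (hγ 0 s' le_rfl hs'.1 hs'.2 ▸ mem_image_of_mem γ ⟨hs.1, hss'⟩)
  · exact .inr (hγ 0 s le_rfl hs.1 hs.2 ▸ mem_image_of_mem γ ⟨hs'.1, hs's⟩)

theorem mem_arc_of_mem_arc_of_mem (h : IsUniqueArcFamily arc) {p q m w : T} (hm : m ∈ arc p q)
    (hw : w ∈ arc m q) : w ∈ arc p q ∧ m ∈ arc p w := by
  obtain ⟨γ, rfl, rfl, hγ⟩ := h.exists_param p q
  rw [← hγ 0 1 le_rfl zero_le_one le_rfl] at hm ⊢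
  obtain ⟨s, hs, rfl⟩ := hm
  rw [← hγ s 1 hs.1 hs.2 le_rfl] at hw
  obtain ⟨s', hs', rfl⟩ := hw
  exact ⟨mem_image_of_mem γ ⟨hs.1.trans hs'.1, hs'.2⟩,
    hγ 0 s' le_rfl (hs.1.trans hs'.1) hs'.2 ▸ mem_image_of_mem γ ⟨hs.1, hs'.1⟩⟩

theorem arc_union_arc (h : IsUniqueArcFamily arc) {p m q : T}
    (hpmq : ∀ w ∈ arc p m, w ∈ arc m q → w = m) : arc p m ∪ arc m q = arc p q := by
  rcases eq_or_ne p m with rfl | hpm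
  · rw [h.arc_self, singleton_union, insert_eq_of_mem (h.left_mem_arc p q)]
  rcases eq_or_ne m q with rfl | hmq
  · rw [h.arc_self, union_singleton, insert_eq_of_mem (h.right_mem_arc p m)]
  exact h.eq_arc _ _ _ ((h.isArcBetween p m hpm).union (h.isArcBetween m q hmq) hpmq)

end Topology

section Metric

variable {T : Type*} [MetricSpace T] {arc : T → T → Set T}

theorem dist_eq_abs_sub_of_mem_arc (h : IsUniqueArcFamily arc) (hadd : DistAdditiveOnArcs arc)
    {p q z w : T} (hz : z ∈ arc p q) (hw : w ∈ arc p q) :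
    dist z w = |dist p z - dist p w| := by
  rcases h.mem_arc_or_mem_arc hz hw with hzw | hwz
  · rw [hadd p w z hzw, abs_sub_comm, add_sub_cancel_left, abs_of_nonneg dist_nonneg,
      dist_comm]
  · rw [hadd p z w hwz, add_sub_cancel_left, abs_of_nonneg dist_nonneg, dist_comm]

theorem mem_arc_of_dist_le (h : IsUniqueArcFamily arc) (hadd : DistAdditiveOnArcs arc)
    {p q z w : T} (hz : z ∈ arc p q) (hw : w ∈ arc p q) (hzw : dist p z ≤ dist p w) :
    z ∈ arc p w := by
  rcases h.mem_arc_or_mem_arc hz hw with hzw' | hwz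
  · exact hzw'
  · have : dist w z = 0 := by linarith [hadd p z w hwz, dist_nonneg (x := w) (y := z)]
    exact dist_eq_zero.1 this ▸ h.right_mem_arc p w

theorem exists_branch_point (h : IsUniqueArcFamily arc) (hadd : DistAdditiveOnArcs arc)
    (x y y' : T) : ∃ m ∈ arc x y ∩ arc x y', dist y y' = dist y m + dist m y' := by
  obtain ⟨m, ⟨hmy, hmy'⟩, hmax⟩ :=
    ((h.isCompact_arc x y).inter_right (h.isCompact_arc x y').isClosed).exists_isMaxOn
      ⟨x, h.left_mem_arc x y, h.left_mem_arc x y'⟩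
      (continuous_const.dist continuous_id).continuousOn
  have hdisj : ∀ w ∈ arc y m, w ∈ arc m y' → w = m := by
    intro w hw hw'
    rw [h.arc_comm] at hw
    obtain ⟨hwy, hmw⟩ := h.mem_arc_of_mem_arc_of_mem hmy hw
    have hwm : dist x w ≤ dist x m := hmax ⟨hwy, (h.mem_arc_of_mem_arc_of_mem hmy' hw').1⟩
    have : dist m w = 0 := by linarith [hadd x w m hmw, dist_nonneg (x := m) (y := w)]
    exact (dist_eq_zero.1 this).symm
  refine ⟨m, ⟨hmy, hmy'⟩, hadd y y' m ?_⟩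
  rw [← h.arc_union_arc hdisj]
  exact .inl (h.right_mem_arc y m)

theorem dist_le_of_mem_arc_of_dist_eq_mul (h : IsUniqueArcFamily arc)
    (hadd : DistAdditiveOnArcs arc) {x y y' z z' : T} {t : ℝ} (ht : t ∈ Icc (0 : ℝ) 1)
    (hz : z ∈ arc x y) (hz' : z' ∈ arc x y')
    (hxz : dist x z = (1 - t) * dist x y) (hxz' : dist x z' = (1 - t) * dist x y') :
    dist z z' ≤ dist y y' := by
  obtain ⟨m, ⟨hmy, hmy'⟩, hyy'⟩ := h.exists_branch_point hadd x y y'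
  have hxy := hadd x y m hmy
  have hxy' := hadd x y' m hmy'
  by_cases hle : dist x z ≤ dist x m ∧ dist x z' ≤ dist x m
  · calc dist z z' = |dist x z - dist x z'| :=
          h.dist_eq_abs_sub_of_mem_arc hadd (h.mem_arc_of_dist_le hadd hz hmy hle.1)
            (h.mem_arc_of_dist_le hadd hz' hmy' hle.2)
      _ = (1 - t) * |dist x y - dist x y'| := by
          rw [hxz, hxz', ← mul_sub, abs_mul, abs_of_nonneg (sub_nonneg.2 ht.2)]
      _ ≤ |dist x y - dist x y'| :=
          mul_le_of_le_one_left (abs_nonneg _) (sub_le_self _ ht.1)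
      _ ≤ dist y y' := by simpa only [dist_comm x] using abs_dist_sub_le y y' x
  · rw [not_and_or, not_le, not_le, hxz, hxz'] at hle
    calc dist z z' ≤ dist z m + dist m z' := dist_triangle z m z'
      _ = |(1 - t) * dist x y - dist x m| + |(1 - t) * dist x y' - dist x m| := by
          rw [h.dist_eq_abs_sub_of_mem_arc hadd hz hmy, dist_comm m,
            h.dist_eq_abs_sub_of_mem_arc hadd hz' hmy', hxz, hxz']
      _ ≤ (dist x y - dist x m) + (dist x y' - dist x m) :=
          abs_sub_add_abs_sub_le ht dist_nonneg (by linarith [dist_nonneg (x := m) (y := y)])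
            (by linarith [dist_nonneg (x := m) (y := y')]) hle
      _ = dist y y' := by rw [hyy', dist_comm y m]; linarith

end Metric

end IsUniqueArcFamily

theorem statement2_general {T : Type*} [MetricSpace T]
    (arc : T → T → Set T)
    -- each `arc y y'` is an arc between `y` and `y'` (for `y ≠ y'`), and `arc y y = {y}`
    (harc : ∀ y y', y ≠ y' → IsArcBetween y y' (arc y y'))
    (harc_refl : ∀ y, arc y y = {y})
    -- unique arcwise connectedness: any arc between `y` and `y'` is `arc y y'`
    (huniq : ∀ y y' s, IsArcBetween y y' s → s = arc y y')
    -- arcs realize distances additively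
    (hadd : ∀ y y', ∀ z ∈ arc y y', dist y y' = dist y z + dist z y')
    -- fixed basepoint, with bounded distances from it
    (x : T)
    -- `F y t` is the unique point on the arc `x T y` at distance `(1-t) * d(x,y)` from `x`
    (F : T → ℝ → T)
    (hF : ∀ y, ∀ t ∈ Icc (0:ℝ) 1,
      F y t ∈ arc x y ∧ dist x (F y t) = (1 - t) * dist x y) :
    ∀ y y', ∀ t ∈ Icc (0:ℝ) 1, dist (F y t) (F y' t) ≤ dist y y' := by
  intro y y' t ht
  have h : IsUniqueArcFamily arc := ⟨harc, harc_refl, huniq⟩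
  obtain ⟨hy, hxy⟩ := hF y t ht
  obtain ⟨hy', hxy'⟩ := hF y' t ht
  exact h.dist_le_of_mem_arc_of_dist_eq_mul hadd ht hy hy' hxy hxy'

/-- In a metric space `T` which is uniquely arcwise connected and in which
arcs realize distances additively, the straight-line retraction
`F y t := ` the unique point on the arc `x T y` at distance `(1−t)·d(x,y)` from the fixed
basepoint `x` (with distances from `x` bounded) satisfies
`d(F y t, F y' t) ≤ d(y, y')` for all `y, y'` and `t ∈ [0,1]`; in particular it is a
continuous homotopy. -/
theorem statement2 {T : Type*} [MetricSpace T]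
    (arc : T → T → Set T)
    -- each `arc y y'` is an arc between `y` and `y'` (for `y ≠ y'`), and `arc y y = {y}`
    (harc : ∀ y y', y ≠ y' → IsArcBetween y y' (arc y y'))
    (harc_refl : ∀ y, arc y y = {y})
    -- unique arcwise connectedness: any arc between `y` and `y'` is `arc y y'`
    (huniq : ∀ y y' s, IsArcBetween y y' s → s = arc y y')
    -- arcs realize distances additively
    (hadd : ∀ y y', ∀ z ∈ arc y y', dist y y' = dist y z + dist z y')
    -- fixed basepoint, with bounded distances from it
    (x : T) (hbdd : ∃ M, ∀ y, dist x y ≤ M)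
    -- `F y t` is the unique point on the arc `x T y` at distance `(1-t) * d(x,y)` from `x`
    (F : T → ℝ → T)
    (hF : ∀ y, ∀ t ∈ Icc (0:ℝ) 1,
      F y t ∈ arc x y ∧ dist x (F y t) = (1 - t) * dist x y) :
    ∀ y y', ∀ t ∈ Icc (0:ℝ) 1, dist (F y t) (F y' t) ≤ dist y y' :=
  statement2_general arc harc harc_refl huniq hadd x F hF
end

section
/- A word w: S → A (with letters indexed over ℕ as pairs e⃗_i, e⃖_i, each fiber finite) is reduced if and only if every position s ∈ S is permanent, where s is permanent if there is a finite I ⊆ ℕ with w(s) ∈ A_I such that s is not deleted in any reduction of the finite word w↾I. -/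
open Set

noncomputable section

/-- A *reduction* of a word `w : S → A` over an alphabet `A` with letter-inversion
`inv`: a totally ordered set `R` (here: the linearly ordered index type `ι`) of disjoint
two-element subsets `{fst i, snd i}` of `S` such that the two elements of each pair
`p ∈ R` are adjacent in `S` minus the union of the pairs preceding `p`, and are mapped
by `w` to mutually inverse letters. -/
structure Reduction {S A : Type} [LinearOrder S] (inv : A → A) (w : S → A) where
  /-- the (linearly ordered) index set of the reduction -/
  ι : Type
  [lin : LinearOrder ι]
  fst : ι → S
  snd : ι → S
  fst_lt_snd : ∀ i, fst i < snd i
  disjoint_pairs : ∀ i j, i ≠ j →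
    fst i ≠ fst j ∧ fst i ≠ snd j ∧ snd i ≠ fst j ∧ snd i ≠ snd j
  inv_pair : ∀ i, w (snd i) = inv (w (fst i))
  adjacent : ∀ i, ∀ s : S, fst i < s → s < snd i →
    ∃ j, j < i ∧ (s = fst j ∨ s = snd j)

attribute [instance] Reduction.lin

namespace Reduction

variable {S A : Type} [LinearOrder S] {inv : A → A} {w : S → A}

/-- The set of positions deleted by a reduction. -/
def deleted (R : Reduction inv w) : Set S := range R.fst ∪ range R.snd

/-- The word to which `w` reduces under the reduction `R`:
the restriction of `w` to the non-deleted positions. -/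
def result (R : Reduction inv w) : {s : S // s ∉ R.deleted} → A := fun s => w s.1

end Reduction

/-- A word is *reduced* if it has no nonempty reduction. -/
def Reduced {S A : Type} [LinearOrder S] (inv : A → A) (w : S → A) : Prop :=
  ∀ R : Reduction inv w, IsEmpty R.ι

/-- Two words are the same *abstract word* if there is an order-preserving bijection
between their position sets commuting with the labellings. -/
def WordEquiv {S₁ S₂ A : Type} [LinearOrder S₁] [LinearOrder S₂]
    (w₁ : S₁ → A) (w₂ : S₂ → A) : Prop :=
  ∃ e : S₁ ≃o S₂, ∀ s, w₂ (e s) = w₁ s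

/-- The alphabet `A = {e⃗₀, e⃖₀, e⃗₁, e⃖₁, …}`: the letter `(b, i)` stands for the
oriented chord `e⃗ᵢ` if `b = true`, and for `e⃖ᵢ` if `b = false`. -/
abbrev Letter := Bool × ℕ

/-- The fixed-point-free involution pairing each letter with its inverse. -/
def Letter.inv (a : Letter) : Letter := (!a.1, a.2)

/-- The set of positions of `w` whose letters have index in `I`
(the domain of the restricted word `w↾I`). -/
abbrev restDom {S : Type} (w : S → Letter) (I : Set ℕ) : Type := {s : S // (w s).2 ∈ I}

/-- The restriction `w↾I` of a word `w` to the letters with index in `I`. -/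
def restr {S : Type} (w : S → Letter) (I : Set ℕ) : restDom w I → Letter :=
  fun s => w s.1

/-- A position `s` of a word `w : S → Letter` is *permanent* if there is a finite set
`I ⊆ ℕ` with `w s ∈ A_I` such that `s` is not deleted in any reduction of the finite
word `w↾I`. -/
def Permanent {S : Type} [LinearOrder S] (w : S → Letter) (s : S) : Prop :=
  ∃ (I : Finset ℕ) (h : (w s).2 ∈ (I : Set ℕ)),
    ∀ R : Reduction Letter.inv (restr w (I : Set ℕ)),
      (⟨s, h⟩ : restDom w (I : Set ℕ)) ∉ R.deleted

/-!
Restricting a reduction of `w` to the pairs with letters in `A_I` gives a reduction of `w↾I`,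
so in a word with a nonempty reduction the first position of any pair is not permanent.
Conversely, if `s` is not permanent, then for every `n` some reduction of the finite word
`w↾{0, …, n + k}` (`k` the index of `w s`) deletes `s`. Recorded as sets of pairs, these
reductions form an inverse system of finite nonempty sets under restriction, so Kőnig's lemma
yields a compatible sequence of them; its union is a nonempty reduction of `w`. Finite fibers
are what make each `w↾I` finite.
-/

namespace Reduction

variable {S A : Type} [LinearOrder S] {inv : A → A} {w : S → A} (R : Reduction inv w)

lemma eq_of_mem_pair {i j : R.ι} {x : S} (hi : x = R.fst i ∨ x = R.snd i)
    (hj : x = R.fst j ∨ x = R.snd j) : i = j := by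
  by_contra hij
  obtain ⟨h1, h2, h3, h4⟩ := R.disjoint_pairs i j hij
  rcases hi with rfl | rfl <;> rcases hj with h | h <;> simp_all

/-- Pairs of a reduction do not cross. -/
lemma snd_lt_snd_of_lt {i j : R.ι} (hji : j < i) {x : S} (hx : x = R.fst j ∨ x = R.snd j)
    (hix : R.fst i < x) (hxi : x < R.snd i) : R.snd j < R.snd i := by
  rcases hx with rfl | rfl
  · by_contra! hle
    have hlt : R.snd i < R.snd j := hle.lt_of_ne (R.disjoint_pairs i j hji.ne').2.2.2
    obtain ⟨k, hkj, hk⟩ := R.adjacent j (R.snd i) hxi hlt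
    exact (hkj.trans hji).ne (R.eq_of_mem_pair hk (Or.inr rfl))
  · exact hxi

end Reduction

/-- A reduction of the word `D.domRestrict w`, recorded by its set of pairs. The pairs are ordered
by their second entries; by `Reduction.snd_lt_snd_of_lt` every reduction is of this form. -/
structure IsReductionOn {S A : Type} [LinearOrder S] (inv : A → A) (w : S → A) (D : Set S)
    (M : Set (S × S)) : Prop where
  subset : M ⊆ D ×ˢ D
  fst_lt_snd : ∀ p ∈ M, p.1 < p.2
  inv_pair : ∀ p ∈ M, w p.2 = inv (w p.1)
  disjoint : ∀ p ∈ M, ∀ q ∈ M, p ≠ q → p.1 ≠ q.1 ∧ p.1 ≠ q.2 ∧ p.2 ≠ q.1 ∧ p.2 ≠ q.2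
  adjacent : ∀ p ∈ M, ∀ t ∈ D, p.1 < t → t < p.2 → ∃ q ∈ M, q.2 < p.2 ∧ (t = q.1 ∨ t = q.2)

section

variable {S A : Type} [LinearOrder S] {inv : A → A} {w : S → A} {D : Set S} {M : Set (S × S)}

lemma Reduction.isReductionOn_pairs (R : Reduction inv (D.domRestrict w)) :
    IsReductionOn inv w D (range fun i => ((R.fst i : S), (R.snd i : S))) where
  subset := by
    rintro _ ⟨i, rfl⟩
    exact ⟨(R.fst i).2, (R.snd i).2⟩
  fst_lt_snd := by
    rintro _ ⟨i, rfl⟩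
    exact R.fst_lt_snd i
  inv_pair := by
    rintro _ ⟨i, rfl⟩
    exact R.inv_pair i
  disjoint := by
    rintro _ ⟨i, rfl⟩ _ ⟨j, rfl⟩ hne
    obtain ⟨h1, h2, h3, h4⟩ := R.disjoint_pairs i j (fun h => hne (h ▸ rfl))
    exact ⟨Subtype.coe_injective.ne h1, Subtype.coe_injective.ne h2,
      Subtype.coe_injective.ne h3, Subtype.coe_injective.ne h4⟩
  adjacent := by
    rintro _ ⟨i, rfl⟩ t ht hit hti
    obtain ⟨j, hji, hj⟩ := R.adjacent i ⟨t, ht⟩ hit hti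
    refine ⟨_, ⟨j, rfl⟩, R.snd_lt_snd_of_lt hji hj hit hti, ?_⟩
    rcases hj with h | h
    · exact Or.inl (congrArg Subtype.val h)
    · exact Or.inr (congrArg Subtype.val h)

namespace IsReductionOn

lemma restrict (h : IsReductionOn inv w D M) {D' : Set S} (hD' : D' ⊆ D)
    (hclosed : ∀ p ∈ M, p.1 ∈ D' ↔ p.2 ∈ D') : IsReductionOn inv w D' {p ∈ M | p.1 ∈ D'} where
  subset p hp := ⟨hp.2, (hclosed p hp.1).1 hp.2⟩
  fst_lt_snd p hp := h.fst_lt_snd p hp.1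
  inv_pair p hp := h.inv_pair p hp.1
  disjoint p hp q hq := h.disjoint p hp.1 q hq.1
  adjacent p hp t ht hpt htp := by
    obtain ⟨q, hq, hqp, htq⟩ := h.adjacent p hp.1 t (hD' ht) hpt htp
    refine ⟨q, ⟨hq, ?_⟩, hqp, htq⟩
    rcases htq with rfl | rfl
    exacts [ht, (hclosed q hq).2 ht]

lemma iUnion {D : ℕ → Set S} {M : ℕ → Set (S × S)} (hD : Monotone D) (hM : Monotone M)
    (hcover : ∀ t, ∃ n, t ∈ D n) (h : ∀ n, IsReductionOn inv w (D n) (M n)) :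
    IsReductionOn inv w univ (⋃ n, M n) where
  subset _ _ := ⟨trivial, trivial⟩
  fst_lt_snd p hp := by
    obtain ⟨n, hn⟩ := mem_iUnion.1 hp
    exact (h n).fst_lt_snd p hn
  inv_pair p hp := by
    obtain ⟨n, hn⟩ := mem_iUnion.1 hp
    exact (h n).inv_pair p hn
  disjoint p hp q hq := by
    obtain ⟨m, hm⟩ := mem_iUnion.1 hp
    obtain ⟨n, hn⟩ := mem_iUnion.1 hq
    exact (h (max m n)).disjoint p (hM (le_max_left m n) hm) q (hM (le_max_right m n) hn)
  adjacent p hp t _ hpt htp := by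
    obtain ⟨m, hm⟩ := mem_iUnion.1 hp
    obtain ⟨n, hn⟩ := hcover t
    obtain ⟨q, hq, hqp, htq⟩ :=
      (h (max m n)).adjacent p (hM (le_max_left m n) hm) t (hD (le_max_right m n) hn) hpt htp
    exact ⟨q, mem_iUnion.2 ⟨_, hq⟩, hqp, htq⟩

def toReduction (h : IsReductionOn inv w univ M) : Reduction inv w where
  ι := M
  lin := LinearOrder.lift' (fun p : M => p.1.2) fun p q hpq => by
    by_contra hne
    exact (h.disjoint p p.2 q q.2 (Subtype.coe_injective.ne hne)).2.2.2 hpq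
  fst p := p.1.1
  snd p := p.1.2
  fst_lt_snd p := h.fst_lt_snd p p.2
  disjoint_pairs p q hpq := h.disjoint p p.2 q q.2 (Subtype.coe_injective.ne hpq)
  inv_pair p := h.inv_pair p p.2
  adjacent p t hpt htp := by
    obtain ⟨q, hq, hqp, htq⟩ := h.adjacent p p.2 t trivial hpt htp
    exact ⟨⟨q, hq⟩, hqp, htq⟩

lemma not_reduced (h : IsReductionOn inv w univ M) (hM : M.Nonempty) : ¬ Reduced inv w :=
  fun hred => (hred h.toReduction).false ⟨hM.some, hM.some_mem⟩

end IsReductionOn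

end

section Letters

variable {S : Type} [LinearOrder S] {w : S → Letter}

lemma Reduction.index_snd (R : Reduction Letter.inv w) (i : R.ι) :
    (w (R.snd i)).2 = (w (R.fst i)).2 := by
  rw [R.inv_pair]
  rfl

def Reduction.restrict (R : Reduction Letter.inv w) (I : Set ℕ) :
    Reduction Letter.inv (restr w I) where
  ι := {i : R.ι // (w (R.fst i)).2 ∈ I}
  fst i := ⟨R.fst i, i.2⟩
  snd i := ⟨R.snd i, (R.index_snd i).symm ▸ i.2⟩
  fst_lt_snd i := R.fst_lt_snd i.1
  disjoint_pairs i j hij := by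
    obtain ⟨h1, h2, h3, h4⟩ := R.disjoint_pairs i j (Subtype.coe_injective.ne hij)
    exact ⟨fun h => h1 (congrArg Subtype.val h), fun h => h2 (congrArg Subtype.val h),
      fun h => h3 (congrArg Subtype.val h), fun h => h4 (congrArg Subtype.val h)⟩
  inv_pair i := R.inv_pair i.1
  adjacent i t hit hti := by
    obtain ⟨j, hji, hj⟩ := R.adjacent i t hit hti
    have hjI : (w (R.fst j)).2 ∈ I := by
      rcases hj with h | h
      · exact h ▸ t.2
      · exact R.index_snd j ▸ h ▸ t.2
    refine ⟨⟨j, hjI⟩, hji, ?_⟩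
    rcases hj with h | h
    exacts [Or.inl (Subtype.ext h), Or.inr (Subtype.ext h)]

theorem reduced_of_forall_permanent (h : ∀ s, Permanent w s) : Reduced Letter.inv w :=
  fun R => ⟨fun i => by
    obtain ⟨I, hI, hR⟩ := h (R.fst i)
    exact hR (R.restrict I) (Or.inl ⟨⟨i, hI⟩, rfl⟩)⟩

lemma IsReductionOn.index_snd {D : Set S} {M : Set (S × S)}
    (h : IsReductionOn Letter.inv w D M) {p : S × S} (hp : p ∈ M) : (w p.2).2 = (w p.1).2 := by
  rw [h.inv_pair p hp]
  rfl

def deletingReductions (w : S → Letter) (I : Set ℕ) (s : S) : Set (Set (S × S)) :=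
  {M | IsReductionOn Letter.inv w {t | (w t).2 ∈ I} M ∧ ∃ p ∈ M, s = p.1 ∨ s = p.2}

lemma finite_deletingReductions (hfib : ∀ a : Letter, {s | w s = a}.Finite) (I : Finset ℕ)
    (s : S) : (deletingReductions w I s).Finite := by
  have hD : {t | (w t).2 ∈ I}.Finite := by
    refine ((Finset.univ ×ˢ I).finite_toSet.biUnion fun a _ => hfib a).subset fun t ht => ?_
    exact mem_biUnion (x := w t) (by simpa using ht) rfl
  exact (hD.prod hD).finite_subsets.subset fun M hM => hM.1.subset

lemma nonempty_deletingReductions {s : S} (hs : ¬ Permanent w s) {I : Finset ℕ}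
    (hI : (w s).2 ∈ I) : (deletingReductions w I s).Nonempty := by
  simp only [Permanent, not_exists, not_forall, not_not] at hs
  obtain ⟨R, hR⟩ := hs I hI
  refine ⟨_, R.isReductionOn_pairs, ?_⟩
  rcases hR with ⟨i, hi⟩ | ⟨i, hi⟩
  exacts [⟨_, ⟨i, rfl⟩, Or.inl (congrArg Subtype.val hi).symm⟩,
    ⟨_, ⟨i, rfl⟩, Or.inr (congrArg Subtype.val hi).symm⟩]

lemma restrict_mem_deletingReductions {I J : Set ℕ} {s : S} {M : Set (S × S)}
    (hM : M ∈ deletingReductions w J s) (hIJ : I ⊆ J) (hs : (w s).2 ∈ I) :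
    {p ∈ M | (w p.1).2 ∈ I} ∈ deletingReductions w I s := by
  obtain ⟨hred, p, hp, hsp⟩ := hM
  refine ⟨hred.restrict (fun t ht => hIJ ht) fun q hq => ?_, p, ⟨hp, ?_⟩, hsp⟩
  · simp only [mem_ofPred_eq, hred.index_snd hq]
  · rcases hsp with rfl | rfl
    exacts [hs, hred.index_snd hp ▸ hs]

theorem exists_isReductionOn_univ_of_not_permanent
    (hfib : ∀ a : Letter, {s | w s = a}.Finite) {s : S} (hs : ¬ Permanent w s) :
    ∃ M, IsReductionOn Letter.inv w univ M ∧ M.Nonempty := by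
  let I n : Finset ℕ := Finset.range (n + (w s).2 + 1)
  have hI : Monotone I := fun m n hmn => Finset.range_subset_range.2 (by omega)
  have hsI n : (w s).2 ∈ I n := Finset.mem_range.2 (by omega)
  let π {i j : ℕ} (hij : i ≤ j) (M : deletingReductions w (I j) s) :
      deletingReductions w (I i) s :=
    ⟨_, restrict_mem_deletingReductions M.2 (Finset.coe_subset.2 (hI hij)) (hsI i)⟩
  have π_refl i (M : deletingReductions w (I i) s) : π le_rfl M = M :=
    Subtype.ext (sep_eq_self_iff_mem_true.2 fun p hp => (M.2.1.subset hp).1)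
  have π_trans i j k (hij : i ≤ j) (hjk : j ≤ k) (M : deletingReductions w (I k) s) :
      π hij (π hjk M) = π (hij.trans hjk) M := by
    ext p
    simp only [π, mem_sep_iff, and_assoc]
    exact and_congr_right fun _ => and_iff_right_of_imp fun h => hI hij h
  have : ∀ n, Finite (deletingReductions w (I n) s) := fun n =>
    (finite_deletingReductions hfib (I n) s).to_subtype
  have : ∀ n, Nonempty (deletingReductions w (I n) s) := fun n =>
    (nonempty_deletingReductions hs (hsI n)).to_subtype
  obtain ⟨f, hf⟩ := exists_seq_forall_proj_of_forall_finite π π_refl π_trans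
    fun _ _ => toFinite _
  have hmono : Monotone fun n => (f n).1 := fun i j hij => by
    simp only [← hf hij, π, sep_subset]
  obtain ⟨p, hp, -⟩ := (f 0).2.2
  have hcover t : ∃ n, (w t).2 ∈ I n := ⟨(w t).2, Finset.mem_range.2 (by omega)⟩
  exact ⟨_, IsReductionOn.iUnion (D := fun n => {t | (w t).2 ∈ I n})
    (fun m n hmn t ht => hI hmn ht) hmono hcover fun n => (f n).2.1, p, mem_iUnion.2 ⟨0, hp⟩⟩

end Letters

theorem statement10_general {S : Type} [LinearOrder S]
    (w : S → Letter) (hfib : ∀ a : Letter, {s | w s = a}.Finite) :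
    Reduced Letter.inv w ↔ ∀ s : S, Permanent w s := by
  refine ⟨fun hred s => ?_, reduced_of_forall_permanent⟩
  by_contra hs
  obtain ⟨M, hM, hne⟩ := exists_isReductionOn_univ_of_not_permanent hfib hs
  exact hM.not_reduced hne hred

/-- Lemma `permanent`. A word `w : S → Letter` (with countable
totally ordered domain and finite fibers) is reduced if and only if every position of
`w` is permanent. -/
theorem statement10 {S : Type} [LinearOrder S] [Countable S]
    (w : S → Letter) (hfib : ∀ a : Letter, {s | w s = a}.Finite) :
    Reduced Letter.inv w ↔ ∀ s : S, Permanent w s :=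
  statement10_general w hfib
end
end

section
/- If R is a reduction of a word w: S → A and I ⊆ ℕ, then the set {{s,s'} ∈ R : w(s) ∈ A_I}, with the ordering induced from R, is a reduction of the restricted word w↾I. Consequently, any result of first reducing and then restricting a word can also be obtained by first restricting and then reducing. -/
open Set

noncomputable section

namespace Reduction

variable {S A : Type} [LinearOrder S] {inv : A → A} {w : S → A}

def restrict_s14 (R : Reduction inv w) (P : S → Prop) (hP : ∀ i, P (R.fst i) ↔ P (R.snd i)) :
    Reduction inv (fun s : {s : S // P s} => w s.1) where
  ι := {i : R.ι // P (R.fst i)}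
  fst i := ⟨R.fst i.1, i.2⟩
  snd i := ⟨R.snd i.1, (hP i.1).1 i.2⟩
  fst_lt_snd i := R.fst_lt_snd i.1
  disjoint_pairs i j hij := by
    obtain ⟨h₁, h₂, h₃, h₄⟩ := R.disjoint_pairs i.1 j.1 (Subtype.coe_ne_coe.2 hij)
    exact ⟨Subtype.coe_ne_coe.1 h₁, Subtype.coe_ne_coe.1 h₂,
      Subtype.coe_ne_coe.1 h₃, Subtype.coe_ne_coe.1 h₄⟩
  inv_pair i := R.inv_pair i.1
  adjacent i s h₁ h₂ := by
    -- `s` lies in an earlier pair of `R`, which survives because `P` contains both members or neither.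
    obtain ⟨j, hji, hs | hs⟩ := R.adjacent i.1 s.1 h₁ h₂
    · exact ⟨⟨j, hs ▸ s.2⟩, hji, Or.inl (Subtype.ext hs)⟩
    · exact ⟨⟨j, (hP j).2 (hs ▸ s.2)⟩, hji, Or.inr (Subtype.ext hs)⟩

theorem mem_restrict_deleted (R : Reduction inv w) {P : S → Prop}
    (hP : ∀ i, P (R.fst i) ↔ P (R.snd i)) (s : {s : S // P s}) :
    s ∈ (R.restrict_s14 P hP).deleted ↔ s.1 ∈ R.deleted := by
  constructor
  · rintro (⟨i, rfl⟩ | ⟨i, rfl⟩)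
    exacts [Or.inl ⟨i.1, rfl⟩, Or.inr ⟨i.1, rfl⟩]
  · rintro (⟨i, hi⟩ | ⟨i, hi⟩)
    · exact Or.inl ⟨⟨i, hi ▸ s.2⟩, Subtype.ext hi⟩
    · exact Or.inr ⟨⟨i, (hP i).2 (hi ▸ s.2)⟩, Subtype.ext hi⟩

theorem wordEquiv_restrict_result (R : Reduction inv w) {P : S → Prop}
    (hP : ∀ i, P (R.fst i) ↔ P (R.snd i)) :
    WordEquiv (R.restrict_s14 P hP).result (fun s : {s : S // P s ∧ s ∉ R.deleted} => w s.1) :=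
  ⟨{ toFun := fun s => ⟨s.1.1, s.1.2, fun h => s.2 ((R.mem_restrict_deleted hP s.1).2 h)⟩
     invFun := fun s => ⟨⟨s.1, s.2.1⟩, fun h => s.2.2 ((R.mem_restrict_deleted hP _).1 h)⟩
     left_inv := fun _ => rfl
     right_inv := fun _ => rfl
     map_rel_iff' := Iff.rfl }, fun _ => rfl⟩

end Reduction

theorem Reduction.index_fst_mem_iff {S : Type} [LinearOrder S] {w : S → Letter}
    (R : Reduction Letter.inv w) (I : Set ℕ) (i : R.ι) :
    (w (R.fst i)).2 ∈ I ↔ (w (R.snd i)).2 ∈ I := by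
  rw [R.inv_pair i]
  rfl

theorem statement14_general {S : Type} [LinearOrder S]
    (w : S → Letter)
    (R : Reduction Letter.inv w) (I : Set ℕ) :
    (∃ Q : Reduction Letter.inv (restr w I),
      ∃ e : {i : R.ι // (w (R.fst i)).2 ∈ I} ≃o Q.ι,
        ∀ i : {i : R.ι // (w (R.fst i)).2 ∈ I},
          ((Q.fst (e i)) : S) = R.fst i.1 ∧ ((Q.snd (e i)) : S) = R.snd i.1) ∧
    (∃ Q : Reduction Letter.inv (restr w I),
      WordEquiv Q.result
        (fun s : {s : S // (w s).2 ∈ I ∧ s ∉ R.deleted} => w s.1)) := by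
  have hI := R.index_fst_mem_iff I
  exact ⟨⟨R.restrict_s14 _ hI, OrderIso.refl _, fun _ => ⟨rfl, rfl⟩⟩,
    ⟨R.restrict_s14 _ hI, R.wordEquiv_restrict_result hI⟩⟩

/-- facts `(1)` and `(2)` about reductions and restrictions.
If `R` is a reduction of the word `w : S → Letter` and `I ⊆ ℕ`, then the set
`{{s,s'} ∈ R : w(s) ∈ A_I}`, with the ordering induced from `R`, is a reduction of the
restricted word `w↾I`.  Consequently, any result of first reducing and then restricting
a word can also be obtained by first restricting and then reducing it. -/
theorem statement14 {S : Type} [LinearOrder S] [Countable S]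
    (w : S → Letter) (hfib : ∀ a : Letter, {s | w s = a}.Finite)
    (R : Reduction Letter.inv w) (I : Set ℕ) :
    (∃ Q : Reduction Letter.inv (restr w I),
      ∃ e : {i : R.ι // (w (R.fst i)).2 ∈ I} ≃o Q.ι,
        ∀ i : {i : R.ι // (w (R.fst i)).2 ∈ I},
          ((Q.fst (e i)) : S) = R.fst i.1 ∧ ((Q.snd (e i)) : S) = R.snd i.1) ∧
    (∃ Q : Reduction Letter.inv (restr w I),
      WordEquiv Q.result
        (fun s : {s : S // (w s).2 ∈ I ∧ s ∉ R.deleted} => w s.1)) :=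
  statement14_general w R I
end
end

section
/- If w = w₁w₂ is a reduced word in the alphabet {e⃗_{i_0}, e⃖_{i_0}, e⃗_{i_1}, e⃖_{i_1}, …} and n(v,k) counts (with sign) the maximal intervals of positions of v carrying the increasing sequence of letters e⃗_{i_{k}}, e⃗_{i_{k+1}}, … minus those carrying the decreasing sequence e⃖_{i_k}, e⃖_{i_{k+1}}, … in reverse order, then there exists k ∈ ℕ such that n(w,ℓ) = n(w₁,ℓ) + n(w₂,ℓ) for all ℓ ≥ k. -/
open Set

noncomputable section

/-- `T` is an interval of positions of `v` of order type `ω` (for `b = true`,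
increasing; for `b = false`, decreasing) carrying the letters
`e⃗_{i_k}, e⃗_{i_{k+1}}, …` (resp. `e⃖_{i_k}, e⃖_{i_{k+1}}, …` in reverse order). -/
def IsMonoInterval {S : Type} [LinearOrder S] (v : S → Letter) (idx : ℕ → ℕ)
    (k : ℕ) (b : Bool) (T : Set S) : Prop :=
  (∀ a ∈ T, ∀ c ∈ T, ∀ s, a ≤ s → s ≤ c → s ∈ T) ∧
  ∃ g : ℕ → S, (if b then StrictMono g else StrictAnti g) ∧
    range g = T ∧ ∀ j, v (g j) = (b, idx (k + j))

/-- `n(v,k) = n⁺(v,k) − n⁺(v⁻,k)`: the signed count of maximal monotone intervals of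
`v` carrying the tail `e⃗_{i_k}, e⃗_{i_{k+1}}, …` of the chord sequence. -/
def nval {S : Type} [LinearOrder S] (v : S → Letter) (idx : ℕ → ℕ) (k : ℕ) : ℤ :=
  ({T | IsMonoInterval v idx k true T}.ncard : ℤ) -
    ({T | IsMonoInterval v idx k false T}.ncard : ℤ)

/-! Every monotone interval of a word is the range of an `ω`-sequence of positions in which
consecutive terms form covering pairs; in particular it is determined by its first position, so
there are finitely many. An interval of `w₁w₂` meeting both factors must therefore cross the
junction through a covering pair `inl a ⋖ inr c`, i.e. `a` is the last position of `w₁` and its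
letter is `e_{i_j}` for some `j ≥ ℓ`. As `idx` is injective this can only happen for `ℓ` up to one
fixed bound; beyond it the monotone intervals of `w` are exactly the images of those of `w₁` and
of `w₂`. -/

open Function

lemma Nat.exists_not_iff_succ {P : ℕ → Prop} {i i' : ℕ} (hi : P i) (hi' : ¬P i') :
    ∃ j, ¬(P j ↔ P (j + 1)) := by
  by_contra! H
  have hP : ∀ n, P n ↔ P 0 := fun n => Nat.rec Iff.rfl (fun n ih => (H n).symm.trans ih) n
  exact hi' ((hP i').2 ((hP i).1 hi))

section Runs

variable {S : Type} [LinearOrder S]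

def IsRun (v : S → Letter) (idx : ℕ → ℕ) (k : ℕ) (b : Bool) (g : ℕ → S) : Prop :=
  (if b then StrictMono g else StrictAnti g) ∧ (range g).OrdConnected ∧
    ∀ j, v (g j) = (b, idx (k + j))

variable {v : S → Letter} {idx : ℕ → ℕ} {k : ℕ} {b : Bool} {g g' : ℕ → S}

lemma isMonoInterval_iff {T : Set S} :
    IsMonoInterval v idx k b T ↔ ∃ g, IsRun v idx k b g ∧ range g = T := by
  constructor
  · rintro ⟨hT, g, hg, rfl, hv⟩
    exact ⟨g, ⟨hg, ⟨fun a ha c hc s hs => hT a ha c hc s hs.1 hs.2⟩, hv⟩, rfl⟩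
  · rintro ⟨g, ⟨hg, hT, hv⟩, rfl⟩
    exact ⟨fun a ha c hc s h₁ h₂ => hT.out ha hc ⟨h₁, h₂⟩, g, hg, rfl, hv⟩

lemma StrictMono.covBy_of_ordConnected_range (hg : StrictMono g) (hT : (range g).OrdConnected)
    (j : ℕ) : g j ⋖ g (j + 1) :=
  (hT.apply_covBy_apply_iff (OrderEmbedding.ofStrictMono g hg)).2 (Order.covBy_add_one j)

lemma StrictAnti.covBy_of_ordConnected_range (hg : StrictAnti g) (hT : (range g).OrdConnected)
    (j : ℕ) : g (j + 1) ⋖ g j :=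
  toDual_covBy_toDual_iff.1 <| hg.dual_right.covBy_of_ordConnected_range hT.dual j

lemma IsRun.covBy (h : IsRun v idx k b g) (j : ℕ) :
    if b then g j ⋖ g (j + 1) else g (j + 1) ⋖ g j := by
  obtain ⟨hg, hT, -⟩ := h
  cases b
  · exact (by simpa using hg : StrictAnti g).covBy_of_ordConnected_range hT j
  · exact (by simpa using hg : StrictMono g).covBy_of_ordConnected_range hT j

lemma IsRun.covBy_or_covBy (h : IsRun v idx k b g) (j : ℕ) :
    g j ⋖ g (j + 1) ∨ g (j + 1) ⋖ g j := by
  have := h.covBy j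
  cases b
  · exact .inr (by simpa using this)
  · exact .inl (by simpa using this)

lemma IsRun.eq_of_apply_zero_eq (h : IsRun v idx k b g) (h' : IsRun v idx k b g')
    (h₀ : g 0 = g' 0) : g = g' := by
  funext j
  induction j with
  | zero => exact h₀
  | succ j ih =>
    have hc := h.covBy j
    have hc' := h'.covBy j
    rw [← ih] at hc'
    cases b
    · exact CovBy.unique_left (by simpa using hc) (by simpa using hc')
    · exact CovBy.unique_right (by simpa using hc) (by simpa using hc')

lemma finite_setOf_isRun (hfib : {s | v s = (b, idx k)}.Finite) :
    {g | IsRun v idx k b g}.Finite :=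
  hfib.of_injOn (f := fun g => g 0) (fun g hg => by simpa using hg.2.2 0)
    fun _ hg _ hg' h₀ => hg.eq_of_apply_zero_eq hg' h₀

lemma finite_setOf_isMonoInterval (hfib : {s | v s = (b, idx k)}.Finite) :
    {T | IsMonoInterval v idx k b T}.Finite := by
  have : {T | IsMonoInterval v idx k b T} = range '' {g | IsRun v idx k b g} := by
    ext T
    simp [isMonoInterval_iff]
  exact this ▸ (finite_setOf_isRun hfib).image _

end Runs

section Embedding

variable {S' S : Type} [LinearOrder S'] [LinearOrder S] (f : S' ↪o S)
  (hf : (range f).OrdConnected)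
include hf

lemma OrderEmbedding.ordConnected_image_iff {T : Set S'} :
    (f '' T).OrdConnected ↔ T.OrdConnected := by
  refine ⟨fun h => ?_, fun h => ⟨?_⟩⟩
  · simpa [f.injective.preimage_image] using h.preimage_mono f.monotone
  · rintro _ ⟨a, ha, rfl⟩ _ ⟨c, hc, rfl⟩
    rw [← f.image_Icc hf]
    exact image_mono (h.out ha hc)

variable {v' : S' → Letter} {v : S → Letter} (hv : ∀ s, v (f s) = v' s)
  {idx : ℕ → ℕ} {k : ℕ} {b : Bool}
include hv

lemma isRun_comp_iff {g : ℕ → S'} : IsRun v idx k b (f ∘ g) ↔ IsRun v' idx k b g := by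
  cases b <;>
  simp only [IsRun, Bool.false_eq_true, if_true, if_false, StrictMono, StrictAnti, comp_apply,
    f.lt_iff_lt, range_comp, f.ordConnected_image_iff hf, hv]

lemma isMonoInterval_image_iff {T : Set S'} :
    IsMonoInterval v idx k b (f '' T) ↔ IsMonoInterval v' idx k b T := by
  simp only [isMonoInterval_iff]
  constructor
  · rintro ⟨g, hg, hgT⟩
    obtain ⟨g', rfl⟩ := range_subset_range_iff_exists_comp.1 (hgT ▸ image_subset_range f T)
    rw [range_comp] at hgT
    exact ⟨g', (isRun_comp_iff f hf hv).1 hg, f.injective.image_injective hgT⟩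
  · rintro ⟨g', hg', rfl⟩
    exact ⟨f ∘ g', (isRun_comp_iff f hf hv).2 hg', range_comp _ _⟩

end Embedding

section SumLex

variable {S₁ S₂ : Type} [LinearOrder S₁] [LinearOrder S₂]

def OrderEmbedding.sumLexInl : S₁ ↪o S₁ ⊕ₗ S₂ :=
  OrderEmbedding.ofStrictMono _ Sum.Lex.inl_strictMono

def OrderEmbedding.sumLexInr : S₂ ↪o S₁ ⊕ₗ S₂ :=
  OrderEmbedding.ofStrictMono _ Sum.Lex.inr_strictMono

open OrderEmbedding (sumLexInl sumLexInr)

lemma mem_range_sumLexInl_or_mem_range_sumLexInr (x : S₁ ⊕ₗ S₂) :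
    x ∈ range sumLexInl ∨ x ∈ range sumLexInr := by
  rcases h : ofLex x with a | c
  · exact .inl ⟨a, congrArg toLex h.symm⟩
  · exact .inr ⟨c, congrArg toLex h.symm⟩

lemma isLowerSet_range_sumLexInl : IsLowerSet (range (sumLexInl : S₁ ↪o S₁ ⊕ₗ S₂)) := by
  rintro _ x hx ⟨a, rfl⟩
  rcases mem_range_sumLexInl_or_mem_range_sumLexInr x with h | ⟨c, rfl⟩
  · exact h
  · exact absurd hx Sum.Lex.not_inr_le_inl

lemma isUpperSet_range_sumLexInr : IsUpperSet (range (sumLexInr : S₂ ↪o S₁ ⊕ₗ S₂)) := by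
  rintro _ x hx ⟨c, rfl⟩
  rcases mem_range_sumLexInl_or_mem_range_sumLexInr x with ⟨a, rfl⟩ | h
  · exact absurd hx Sum.Lex.not_inr_le_inl
  · exact h

lemma disjoint_range_sumLexInl_range_sumLexInr :
    Disjoint (range (sumLexInl : S₁ ↪o S₁ ⊕ₗ S₂)) (range sumLexInr) := by
  rw [disjoint_left]
  rintro _ ⟨a, rfl⟩ ⟨c, hc⟩
  exact Sum.Lex.not_inr_le_inl hc.le

lemma isMax_of_sumLexInl_covBy_sumLexInr {a : S₁} {c : S₂} (h : sumLexInl a ⋖ sumLexInr c) :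
    IsMax a :=
  isMax_iff_forall_not_lt.2 fun t hat =>
    h.2 (OrderEmbedding.lt_iff_lt _ |>.2 hat) (Sum.Lex.inl_lt_inr t c)

variable {w₁ : S₁ → Letter} {w₂ : S₂ → Letter} {w : S₁ ⊕ₗ S₂ → Letter}
  (hw₁ : ∀ s, w (sumLexInl s) = w₁ s) (hw₂ : ∀ s, w (sumLexInr s) = w₂ s)
  {idx : ℕ → ℕ} {ℓ : ℕ} {b : Bool}

include hw₁ in
lemma IsRun.range_subset_or {g : ℕ → S₁ ⊕ₗ S₂} (hg : IsRun w idx ℓ b g)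
    (hmax : ∀ a, IsMax a → ∀ j ≥ ℓ, w₁ a ≠ (b, idx j)) :
    range g ⊆ range sumLexInl ∨ range g ⊆ range sumLexInr := by
  by_contra h
  rw [not_or, not_subset, not_subset] at h
  obtain ⟨⟨_, ⟨i, rfl⟩, hi⟩, ⟨_, ⟨i', rfl⟩, hi'⟩⟩ := h
  have hi₁ : g i' ∈ range sumLexInl :=
    (mem_range_sumLexInl_or_mem_range_sumLexInr _).resolve_right hi'
  obtain ⟨j, hj⟩ := Nat.exists_not_iff_succ (P := fun n => g n ∈ range sumLexInl) hi₁ hi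
  obtain ⟨p, q, hpq, ⟨a, ha⟩, ⟨c, hc⟩⟩ : ∃ p q, (g p ⋖ g q ∨ g q ⋖ g p) ∧
      g p ∈ range sumLexInl ∧ g q ∈ range sumLexInr := by
    by_cases hl : g j ∈ range sumLexInl
    · exact ⟨j, j + 1, hg.covBy_or_covBy j, hl,
        (mem_range_sumLexInl_or_mem_range_sumLexInr _).resolve_left (by tauto)⟩
    · exact ⟨j + 1, j, (hg.covBy_or_covBy j).symm, by tauto,
        (mem_range_sumLexInl_or_mem_range_sumLexInr _).resolve_left hl⟩
  rw [← ha, ← hc] at hpq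
  have hcov : sumLexInl a ⋖ sumLexInr c :=
    hpq.resolve_right fun h => Sum.Lex.not_inr_lt_inl h.lt
  refine hmax a (isMax_of_sumLexInl_covBy_sumLexInr hcov) (ℓ + p) (Nat.le_add_right ℓ p) ?_
  rw [← hw₁, ha, hg.2.2 p]

include hw₁ hw₂ in
lemma setOf_isMonoInterval_sumLex (hmax : ∀ a, IsMax a → ∀ j ≥ ℓ, w₁ a ≠ (b, idx j)) :
    {T | IsMonoInterval w idx ℓ b T} =
      image sumLexInl '' {T | IsMonoInterval w₁ idx ℓ b T} ∪
        image sumLexInr '' {T | IsMonoInterval w₂ idx ℓ b T} := by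
  have hl (T : Set S₁) :
      IsMonoInterval w idx ℓ b (sumLexInl '' T) ↔ IsMonoInterval w₁ idx ℓ b T :=
    isMonoInterval_image_iff _ isLowerSet_range_sumLexInl.ordConnected hw₁
  have hr (T : Set S₂) :
      IsMonoInterval w idx ℓ b (sumLexInr '' T) ↔ IsMonoInterval w₂ idx ℓ b T :=
    isMonoInterval_image_iff _ isUpperSet_range_sumLexInr.ordConnected hw₂
  ext T
  constructor
  · intro hT
    obtain ⟨g, hg, rfl⟩ := isMonoInterval_iff.1 hT
    rcases hg.range_subset_or hw₁ hmax with h | h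
    · rw [← image_preimage_eq_of_subset h] at hT
      exact .inl ⟨_, (hl _).1 hT, image_preimage_eq_of_subset h⟩
    · rw [← image_preimage_eq_of_subset h] at hT
      exact .inr ⟨_, (hr _).1 hT, image_preimage_eq_of_subset h⟩
  · rintro (⟨T, hT, rfl⟩ | ⟨T, hT, rfl⟩)
    exacts [(hl T).2 hT, (hr T).2 hT]

include hw₁ hw₂ in
lemma ncard_setOf_isMonoInterval_sumLex (hfib₁ : {s | w₁ s = (b, idx ℓ)}.Finite)
    (hfib₂ : {s | w₂ s = (b, idx ℓ)}.Finite) (hmax : ∀ a, IsMax a → ∀ j ≥ ℓ, w₁ a ≠ (b, idx j)) :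
    {T | IsMonoInterval w idx ℓ b T}.ncard =
      {T | IsMonoInterval w₁ idx ℓ b T}.ncard + {T | IsMonoInterval w₂ idx ℓ b T}.ncard := by
  have hdisj : Disjoint (image sumLexInl '' {T | IsMonoInterval w₁ idx ℓ b T})
      (image sumLexInr '' {T | IsMonoInterval w₂ idx ℓ b T}) := by
    rw [disjoint_left]
    rintro _ ⟨T₁, hT₁, rfl⟩ ⟨T₂, -, hT⟩
    obtain ⟨g, -, rfl⟩ := isMonoInterval_iff.1 hT₁
    exact disjoint_left.1 disjoint_range_sumLexInl_range_sumLexInr (mem_range_self (g 0))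
      (image_subset_range _ _ (hT ▸ mem_image_of_mem _ (mem_range_self 0)))
  rw [setOf_isMonoInterval_sumLex hw₁ hw₂ hmax,
    ncard_union_eq hdisj ((finite_setOf_isMonoInterval hfib₁).image _)
      ((finite_setOf_isMonoInterval hfib₂).image _),
    ncard_image_of_injective _ sumLexInl.injective.image_injective,
    ncard_image_of_injective _ sumLexInr.injective.image_injective]

include hw₁ hw₂ in
lemma nval_sumLex (hfib₁ : ∀ a, {s | w₁ s = a}.Finite) (hfib₂ : ∀ a, {s | w₂ s = a}.Finite)
    (hmax : ∀ a, IsMax a → ∀ j ≥ ℓ, (w₁ a).2 ≠ idx j) :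
    nval w idx ℓ = nval w₁ idx ℓ + nval w₂ idx ℓ := by
  have hmax' (b : Bool) : ∀ a, IsMax a → ∀ j ≥ ℓ, w₁ a ≠ (b, idx j) :=
    fun a ha j hj h => hmax a ha j hj (by rw [h])
  simp only [nval, ncard_setOf_isMonoInterval_sumLex hw₁ hw₂ (hfib₁ _) (hfib₂ _) (hmax' _)]
  push_cast
  ring

end SumLex

lemma exists_forall_isMax_idx_ne {S : Type} [LinearOrder S] (v : S → Letter) {idx : ℕ → ℕ}
    (hidx : Injective idx) : ∃ k, ∀ a : S, IsMax a → ∀ j ≥ k, (v a).2 ≠ idx j := by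
  by_cases htop : ∃ a : S, IsMax a
  · obtain ⟨a₀, ha₀⟩ := htop
    obtain ⟨k, hk⟩ :=
      Filter.eventually_atTop.1 (hidx.nat_tendsto_atTop.eventually_ne_atTop (v a₀).2)
    refine ⟨k, fun a ha j hj => ?_⟩
    rw [← ha.eq_of_ge (ha₀.isTop a)]
    exact (hk j hj).symm
  · exact ⟨0, fun a ha => absurd ⟨a, ha⟩ htop⟩

theorem statement16_general {S₁ S₂ : Type} [LinearOrder S₁] [LinearOrder S₂]
    (w₁ : S₁ → Letter) (w₂ : S₂ → Letter)
    (hfib₁ : ∀ a : Letter, {s | w₁ s = a}.Finite)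
    (hfib₂ : ∀ a : Letter, {s | w₂ s = a}.Finite)
    (idx : ℕ → ℕ) (hidx : Function.Injective idx)
    (w : (S₁ ⊕ₗ S₂) → Letter) (hw : w = fun s => Sum.elim w₁ w₂ (ofLex s)) :
    ∃ k : ℕ, ∀ ℓ ≥ k, nval w idx ℓ = nval w₁ idx ℓ + nval w₂ idx ℓ := by
  subst hw
  obtain ⟨k, hk⟩ := exists_forall_isMax_idx_ne w₁ hidx
  exact ⟨k, fun ℓ hℓ => nval_sumLex (fun _ => rfl) (fun _ => rfl) hfib₁ hfib₂
    fun a ha j hj => hk a ha j (hℓ.trans hj)⟩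

/-- fact `subdivideN`. If `w = w₁w₂` is a reduced word in the
alphabet `{e⃗_{i_j}, e⃖_{i_j} : j ∈ ℕ}` (the chords `e_{i_0}, e_{i_1}, …` being given by
an injective index sequence), then there is a `k ∈ ℕ` such that
`n(w,ℓ) = n(w₁,ℓ) + n(w₂,ℓ)` for all `ℓ ≥ k`. -/
theorem statement16 {S₁ S₂ : Type} [LinearOrder S₁] [Countable S₁]
    [LinearOrder S₂] [Countable S₂]
    (w₁ : S₁ → Letter) (w₂ : S₂ → Letter)
    (hfib₁ : ∀ a : Letter, {s | w₁ s = a}.Finite)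
    (hfib₂ : ∀ a : Letter, {s | w₂ s = a}.Finite)
    (idx : ℕ → ℕ) (hidx : Function.Injective idx)
    (w : (S₁ ⊕ₗ S₂) → Letter) (hw : w = fun s => Sum.elim w₁ w₂ (ofLex s))
    (hred : Reduced Letter.inv w) :
    ∃ k : ℕ, ∀ ℓ ≥ k, nval w idx ℓ = nval w₁ idx ℓ + nval w₂ idx ℓ :=
  statement16_general w₁ w₂ hfib₁ hfib₂ idx hidx w hw
end
end
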